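/- Lipschitz parameterization of Exp4: Assume there exists ρ > 0 such that for all t ≥ 1 and all i ∈ [K], Σ_{j ∈ E} ξ_{j,t}(i) ≥ ρ. Let F ≥ |E|, ε ∈ (0, ρ/F), R > 0, T_ε = min( ⌊ (1/F − ε/ρ) · √n / R ⌋, n ), and L_ε = (1/(R ε²)) · exp(1/ε²). Then for all parameters θ, δ ∈ [0, R] (with r ≤ θ, δ ≤ R for any 0 ≤ r ≤ R) and all t ≤ T_ε, sup_{k ∈ [K]} | log( π_t^θ(k) / π_t^δ(k) ) | ≤ L_ε |θ − δ|, where both sequences are computed from the same expert advice, rewards and actions. -/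

import Mathlib

/-!
The weights keep a floor: each estimated reward satisfies `ŷ_{j,s} q_s(j) ≤ 1`, so one round
lowers `exp(-η Y_j)` by at most `η |E|`, whence `q_t(j) ≥ 1/|E| - (t-1)θ/√n`; with
`Σ_j ξ_{j,t}(i) ≥ ρ` this keeps `π_t ≥ ε` up to `T_ε`. There the sup-distance `u_s` of the score
vectors `(θ/√n) Y^θ_s` and `(δ/√n) Y^δ_s` satisfies a linear recursion: a softmax changes by a
factor at most `e^{2u_s}`, so `|log (π^θ/π^δ)| ≤ 2 u_s`, and on `[ε, ∞)` the map `p ↦ 1/p` is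
`1/ε`-Lipschitz in `log p`. Hence `u_{s+1} ≤ (1 + 2R/(√n ε)) u_s + |θ - δ|/(√n ε)`, and the discrete
Grönwall inequality with `2ε R s/√n ≤ 1` yields `L_ε`.
-/

/-- Softmax distribution associated with a score vector. -/
noncomputable def softmax {ι : Type*} [Fintype ι] (h : ι → ℝ) (a : ι) : ℝ :=
  Real.exp (h a) / ∑ b, Real.exp (h b)

/-- Cumulative estimated expert rewards `Y t j = Σ_{s=1}^t ŷ_{j,s}` of the `Exp4`
algorithm with learning rate `θ/√n`, where
`ŷ_{j,s} = ξ_{j,s}(A_s) g_{A_s,s} / π_s(A_s)` and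
`π_s(a) = Σ_i q_s(i) ξ_{i,s}(a)`. -/
noncomputable def exp4Y (n K : ℕ) {E : Type*} [Fintype E]
    (ξ : E → ℕ → Fin K → ℝ) (g : Fin K → ℕ → ℝ) (A : ℕ → Fin K) (θ : ℝ) :
    ℕ → E → ℝ
  | 0 => fun _ => 0
  | (t + 1) => fun j =>
      exp4Y n K ξ g A θ t j +
        ξ j (t + 1) (A (t + 1)) * g (A (t + 1)) (t + 1) /
          (∑ i, softmax (fun i' => -(θ / Real.sqrt n) * exp4Y n K ξ g A θ t i') i *
            ξ i (t + 1) (A (t + 1)))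

/-- The `Exp4` expert weights: `q_1` is uniform over experts and
`q_{t+1} = softmax(−(θ/√n) Σ_{s≤t} ŷ_{·,s})`. -/
noncomputable def exp4q (n K : ℕ) {E : Type*} [Fintype E]
    (ξ : E → ℕ → Fin K → ℝ) (g : Fin K → ℕ → ℝ) (A : ℕ → Fin K) (θ : ℝ)
    (t : ℕ) : E → ℝ :=
  softmax (fun i => -(θ / Real.sqrt n) * exp4Y n K ξ g A θ (t - 1) i)

/-- The `Exp4` mixture action probabilities `π_t(a) = Σ_j q_t(j) ξ_{j,t}(a)`. -/
noncomputable def exp4Pi (n K : ℕ) {E : Type*} [Fintype E]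
    (ξ : E → ℕ → Fin K → ℝ) (g : Fin K → ℕ → ℝ) (A : ℕ → Fin K) (θ : ℝ)
    (t : ℕ) (a : Fin K) : ℝ :=
  ∑ j, exp4q n K ξ g A θ t j * ξ j t a

open Real Finset

section Softmax

variable {ι : Type*} [Fintype ι]

lemma sum_exp_pos [Nonempty ι] (h : ι → ℝ) : 0 < ∑ b, exp (h b) :=
  sum_pos (fun _ _ => exp_pos _) univ_nonempty

lemma softmax_pos (h : ι → ℝ) (a : ι) : 0 < softmax h a :=
  have : Nonempty ι := ⟨a⟩
  div_pos (exp_pos _) (sum_exp_pos h)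

lemma softmax_le_exp_mul_softmax (u v : ι → ℝ) (a : ι) :
    softmax u a ≤ exp (2 * ‖u - v‖) * softmax v a := by
  have : Nonempty ι := ⟨a⟩
  set c := ‖u - v‖
  have huv : ∀ i, |u i - v i| ≤ c := fun i => by simpa using norm_le_pi_norm (u - v) i
  have hnum : exp (u a) ≤ exp c * exp (v a) := by
    rw [← exp_add]
    exact exp_le_exp.2 (by linarith [(abs_le.1 (huv a)).2])
  have hden : exp (-c) * ∑ b, exp (v b) ≤ ∑ b, exp (u b) := by
    rw [mul_sum]
    refine sum_le_sum fun i _ => ?_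
    rw [← exp_add]
    exact exp_le_exp.2 (by linarith [(abs_le.1 (huv i)).1])
  calc softmax u a ≤ exp c * exp (v a) / (exp (-c) * ∑ b, exp (v b)) :=
        div_le_div₀ (by positivity) hnum (mul_pos (exp_pos _) (sum_exp_pos v)) hden
    _ = exp (2 * c) * softmax v a := by
        rw [softmax, exp_neg, two_mul, exp_add]
        field_simp

lemma sum_exp_neg_mul_le_card {η : ℝ} {y : ι → ℝ} (hη : 0 ≤ η) (hy : 0 ≤ y) :
    ∑ i, exp (-η * y i) ≤ Fintype.card ι := by
  calc ∑ i, exp (-η * y i) ≤ ∑ _i : ι, (1 : ℝ) :=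
        sum_le_sum fun i _ =>
          exp_le_one_iff.2 (by rw [neg_mul]; exact neg_nonpos.2 (mul_nonneg hη (hy i)))
    _ = Fintype.card ι := by simp

variable {Y : ℕ → ι → ℝ} {η : ℝ}

lemma one_sub_mul_card_le_exp_neg_mul (hη : 0 ≤ η) (hY0 : Y 0 = 0) (hY : Monotone Y)
    (hinc : ∀ s j, (Y (s + 1) j - Y s j) * softmax (fun i => -η * Y s i) j ≤ 1) (s : ℕ) (j : ι) :
    1 - s * η * Fintype.card ι ≤ exp (-η * Y s j) := by
  induction s with
  | zero => simp [hY0]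
  | succ s ih =>
    set w := exp (-η * Y s j)
    set d := Y (s + 1) j - Y s j
    have hd : 0 ≤ d := sub_nonneg.2 (hY s.le_succ j)
    have : Nonempty ι := ⟨j⟩
    have hdw : d * w ≤ Fintype.card ι := by
      have hw : w = softmax (fun i => -η * Y s i) j * ∑ i, exp (-η * Y s i) :=
        (div_mul_cancel₀ _ (sum_exp_pos _).ne').symm
      rw [hw, ← mul_assoc]
      calc _ ≤ 1 * ∑ i, exp (-η * Y s i) :=
            mul_le_mul_of_nonneg_right (hinc s j) (sum_exp_pos _).le
        _ ≤ _ := by rw [one_mul]; exact sum_exp_neg_mul_le_card hη (hY0 ▸ hY s.zero_le)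
    calc 1 - ((s + 1 : ℕ) : ℝ) * η * Fintype.card ι
        = (1 - s * η * Fintype.card ι) - η * Fintype.card ι := by push_cast; ring
      _ ≤ w - η * (d * w) := by gcongr
      _ = w * (1 - η * d) := by ring
      _ ≤ w * exp (-η * d) := by
          gcongr
          linarith [add_one_le_exp (-η * d)]
      _ = exp (-η * Y (s + 1) j) := by
          rw [← exp_add]
          congr 1
          ring

lemma inv_card_sub_mul_le_softmax (hη : 0 ≤ η) (hY0 : Y 0 = 0) (hY : Monotone Y)
    (hinc : ∀ s j, (Y (s + 1) j - Y s j) * softmax (fun i => -η * Y s i) j ≤ 1) (s : ℕ) (j : ι) :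
    1 / Fintype.card ι - s * η ≤ softmax (fun i => -η * Y s i) j := by
  have : Nonempty ι := ⟨j⟩
  have hcard : (0 : ℝ) < Fintype.card ι := Nat.cast_pos.2 Fintype.card_pos
  calc 1 / Fintype.card ι - s * η = (1 - s * η * Fintype.card ι) / Fintype.card ι := by
        field_simp
    _ ≤ exp (-η * Y s j) / Fintype.card ι :=
        div_le_div_of_nonneg_right (one_sub_mul_card_le_exp_neg_mul hη hY0 hY hinc s j)
          hcard.le
    _ ≤ exp (-η * Y s j) / ∑ i, exp (-η * Y s i) :=
        div_le_div_of_nonneg_left (exp_pos _).le (sum_exp_pos _)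
          (sum_exp_neg_mul_le_card hη (hY0 ▸ hY s.zero_le))
    _ = softmax (fun i => -η * Y s i) j := rfl

end Softmax

lemma abs_log_div_le_of_le_exp_mul {p p' c : ℝ} (hp : 0 < p) (hp' : 0 < p')
    (h : p ≤ exp c * p') (h' : p' ≤ exp c * p) : |log (p / p')| ≤ c := by
  have h₁ := log_le_log hp h
  have h₂ := log_le_log hp' h'
  rw [log_mul (exp_ne_zero _) hp'.ne', log_exp] at h₁
  rw [log_mul (exp_ne_zero _) hp.ne', log_exp] at h₂
  rw [log_div hp.ne' hp'.ne', abs_le]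
  constructor <;> linarith

lemma abs_inv_sub_inv_le_abs_log_div {p p' ε : ℝ} (hε : 0 < ε) (hp : ε ≤ p) (hp' : ε ≤ p') :
    |p⁻¹ - p'⁻¹| ≤ |log (p / p')| / ε := by
  wlog h : p ≤ p' generalizing p p'
  · rw [abs_sub_comm, ← abs_neg (log _), ← log_inv, inv_div]
    exact this hp' hp (le_of_not_ge h)
  have hp0 : 0 < p := hε.trans_le hp
  have hlog : 0 ≤ log (p' / p) := log_nonneg ((one_le_div hp0).2 h)
  rw [abs_of_nonneg (sub_nonneg.2 (inv_anti₀ hp0 h)), ← abs_neg, ← log_inv, inv_div,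
    abs_of_nonneg hlog]
  calc p⁻¹ - p'⁻¹ = p⁻¹ * (1 - (p' / p)⁻¹) := by field_simp
    _ ≤ p⁻¹ * log (p' / p) := by
        gcongr
        exact one_sub_inv_le_log_of_pos (div_pos (hp0.trans_le h) hp0)
    _ ≤ ε⁻¹ * log (p' / p) := by gcongr
    _ = log (p' / p) / ε := inv_mul_eq_div _ _

lemma discrete_gronwall_of_forall_lt {u : ℕ → ℝ} {a b : ℝ} {N : ℕ} (ha : 0 ≤ a) (hb : 0 ≤ b)
    (hu0 : u 0 ≤ 0) (hu : ∀ s < N, u (s + 1) ≤ (1 + a) * u s + b) :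
    ∀ s ≤ N, u s ≤ b * s * exp (a * s) := by
  intro s hs
  induction s with
  | zero => simpa using hu0
  | succ s ih =>
    calc u (s + 1) ≤ (1 + a) * u s + b := hu s hs
      _ ≤ (1 + a) * (b * s * exp (a * s)) + b := by gcongr; exact ih (by omega)
      _ ≤ exp a * (b * s * exp (a * s)) + b * exp (a * (s + 1)) := by
          gcongr
          · exact add_comm a 1 ▸ add_one_le_exp a
          · exact le_mul_of_one_le_right hb (one_le_exp (by positivity))
      _ = b * ((s + 1 : ℕ) : ℝ) * exp (a * ((s + 1 : ℕ) : ℝ)) := by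
          push_cast
          rw [mul_add, exp_add, mul_one]
          ring

lemma mul_le_of_le_floor {X R c : ℝ} {s : ℕ} (hX : 0 ≤ X) (hR : 0 < R) (hc : 0 ≤ c)
    (hs : s ≤ ⌊X * c / R⌋₊) : R / c * s ≤ X := by
  have h : (s : ℝ) ≤ X * c / R := (Nat.cast_le.2 hs).trans (Nat.floor_le (by positivity))
  rcases hc.eq_or_lt with rfl | hc
  · simpa using hX
  rw [le_div_iff₀ hR] at h
  rw [div_mul_eq_mul_div, div_le_iff₀ hc]
  linarith

lemma two_mul_mul_sub_div_le_one {ε ρ F : ℝ} (hε : 0 < ε) (hρ : 0 < ρ) (hρF : ρ ≤ F)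
    (hF : 1 ≤ F) : 2 * ε * (1 / F - ε / ρ) ≤ 1 :=
  calc 2 * ε * (1 / F - ε / ρ) ≤ 2 * ε * (1 / F - ε / F) := by gcongr
    _ = 2 * ε * (1 - ε) / F := by ring
    _ ≤ 1 / F := by gcongr; nlinarith [sq_nonneg (2 * ε - 1)]
    _ ≤ 1 := div_le_one_of_le₀ hF (by linarith)

lemma two_mul_gronwall_bound_le {Δ R ε c m : ℝ} (hΔ : 0 ≤ Δ) (hR : 0 < R) (hε : 0 < ε)
    (hεm : 2 * ε * (R / c * m) ≤ 1) :
    2 * (Δ / c / ε * m * exp (2 * (R / c) / ε * m)) ≤ 1 / (R * ε ^ 2) * exp (1 / ε ^ 2) * Δ := by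
  set z := 2 * ε * (R / c * m)
  have hz : 2 * (Δ / c / ε * m * exp (2 * (R / c) / ε * m)) =
      Δ / (R * ε ^ 2) * (z * exp (z / ε ^ 2)) := by
    simp only [z]
    field_simp
  rw [hz, mul_comm _ Δ, div_eq_mul_one_div Δ, mul_assoc]
  gcongr
  calc z * exp (z / ε ^ 2) ≤ 1 * exp (1 / ε ^ 2) := by gcongr
    _ = exp (1 / ε ^ 2) := one_mul _

noncomputable def exp4Score (n K : ℕ) {E : Type*} [Fintype E]
    (ξ : E → ℕ → Fin K → ℝ) (g : Fin K → ℕ → ℝ) (A : ℕ → Fin K) (θ : ℝ) (s : ℕ) : E → ℝ :=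
  (θ / √n) • exp4Y n K ξ g A θ s

section Exp4

variable {n K : ℕ} {E : Type*} [Fintype E] {ξ : E → ℕ → Fin K → ℝ} {g : Fin K → ℕ → ℝ}
  {A : ℕ → Fin K} {θ δ : ℝ} {s : ℕ}

lemma exp4q_succ (θ : ℝ) (s : ℕ) :
    exp4q n K ξ g A θ (s + 1) = softmax (fun i => -(θ / √n) * exp4Y n K ξ g A θ s i) := rfl

lemma exp4q_succ_eq_softmax_neg_exp4Score (θ : ℝ) (s : ℕ) :
    exp4q n K ξ g A θ (s + 1) = softmax (-exp4Score n K ξ g A θ s) := by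
  rw [exp4q_succ]
  congr 1
  funext i
  simp [exp4Score]

lemma exp4Y_zero (θ : ℝ) : exp4Y n K ξ g A θ 0 = 0 := rfl

lemma exp4Y_succ (θ : ℝ) (s : ℕ) (j : E) :
    exp4Y n K ξ g A θ (s + 1) j = exp4Y n K ξ g A θ s j +
      ξ j (s + 1) (A (s + 1)) * g (A (s + 1)) (s + 1) / exp4Pi n K ξ g A θ (s + 1) (A (s + 1)) :=
  rfl

lemma exp4Score_succ (θ : ℝ) (s : ℕ) (j : E) :
    exp4Score n K ξ g A θ (s + 1) j = exp4Score n K ξ g A θ s j + θ / √n *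
      (ξ j (s + 1) (A (s + 1)) * g (A (s + 1)) (s + 1) /
        exp4Pi n K ξ g A θ (s + 1) (A (s + 1))) := by
  simp only [exp4Score, Pi.smul_apply, smul_eq_mul, exp4Y_succ, mul_add]

lemma exp4q_mul_le_exp4Pi (hξ0 : ∀ j t a, 0 ≤ ξ j t a) (θ : ℝ) (t : ℕ) (j : E) (a : Fin K) :
    exp4q n K ξ g A θ t j * ξ j t a ≤ exp4Pi n K ξ g A θ t a :=
  single_le_sum (f := fun i => exp4q n K ξ g A θ t i * ξ i t a)
    (fun _ _ => mul_nonneg (softmax_pos _ _).le (hξ0 _ _ _)) (mem_univ j)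

lemma exp4Pi_nonneg (hξ0 : ∀ j t a, 0 ≤ ξ j t a) (θ : ℝ) (t : ℕ) (a : Fin K) :
    0 ≤ exp4Pi n K ξ g A θ t a :=
  sum_nonneg fun _ _ => mul_nonneg (softmax_pos _ _).le (hξ0 _ _ _)

lemma exp4Y_le_exp4Y_succ (hξ0 : ∀ j t a, 0 ≤ ξ j t a) (hg : ∀ a t, g a t ∈ Set.Icc (0 : ℝ) 1)
    (θ : ℝ) (s : ℕ) (j : E) : exp4Y n K ξ g A θ s j ≤ exp4Y n K ξ g A θ (s + 1) j := by
  rw [exp4Y_succ, le_add_iff_nonneg_right]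
  exact div_nonneg (mul_nonneg (hξ0 _ _ _) (hg _ _).1) (exp4Pi_nonneg hξ0 _ _ _)

/- `q_{s+1}(j) ξ_{j,s+1}(A_{s+1})` is one of the terms of `π_{s+1}(A_{s+1})`, so the estimated
reward `ŷ_{j,s+1}` is at most `1 / q_{s+1}(j)`. -/
lemma exp4Y_succ_sub_mul_exp4q_le_one (hξ0 : ∀ j t a, 0 ≤ ξ j t a)
    (hg : ∀ a t, g a t ∈ Set.Icc (0 : ℝ) 1) (θ : ℝ) (s : ℕ) (j : E) :
    (exp4Y n K ξ g A θ (s + 1) j - exp4Y n K ξ g A θ s j) * exp4q n K ξ g A θ (s + 1) j ≤ 1 := by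
  rw [exp4Y_succ, add_sub_cancel_left, div_mul_eq_mul_div]
  refine div_le_one_of_le₀ ?_ (exp4Pi_nonneg hξ0 _ _ _)
  calc ξ j (s + 1) (A (s + 1)) * g (A (s + 1)) (s + 1) * exp4q n K ξ g A θ (s + 1) j
      ≤ ξ j (s + 1) (A (s + 1)) * 1 * exp4q n K ξ g A θ (s + 1) j := by
        gcongr
        · exact (softmax_pos _ _).le
        · exact hξ0 _ _ _
        · exact (hg _ _).2
    _ ≤ exp4Pi n K ξ g A θ (s + 1) (A (s + 1)) := by
        rw [mul_one, mul_comm]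
        exact exp4q_mul_le_exp4Pi hξ0 _ _ _ _

lemma inv_card_sub_le_exp4q (hξ0 : ∀ j t a, 0 ≤ ξ j t a) (hg : ∀ a t, g a t ∈ Set.Icc (0 : ℝ) 1)
    (hθ : 0 ≤ θ) (s : ℕ) (j : E) :
    1 / Fintype.card E - s * (θ / √n) ≤ exp4q n K ξ g A θ (s + 1) j :=
  inv_card_sub_mul_le_softmax (div_nonneg hθ (sqrt_nonneg _)) (exp4Y_zero θ)
    (monotone_nat_of_le_succ fun s j => exp4Y_le_exp4Y_succ hξ0 hg θ s j)
    (exp4Y_succ_sub_mul_exp4q_le_one hξ0 hg θ) s j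

lemma eps_le_exp4Pi_succ {ρ ε R : ℝ} {F : ℕ} {a : Fin K} (hξ0 : ∀ j t a, 0 ≤ ξ j t a)
    (hg : ∀ a t, g a t ∈ Set.Icc (0 : ℝ) 1) (hε : 0 < ε) (hρ : 0 < ρ)
    (hρξ : ρ ≤ ∑ j, ξ j (s + 1) a) (hF : Fintype.card E ≤ F) (hθ : θ ∈ Set.Icc 0 R)
    (hs : R / √n * s ≤ 1 / F - ε / ρ) : ε ≤ exp4Pi n K ξ g A θ (s + 1) a := by
  have : Nonempty E := univ_nonempty_iff.1 (nonempty_of_sum_ne_zero (hρ.trans_le hρξ).ne')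
  have hq : ∀ j, ε / ρ ≤ exp4q n K ξ g A θ (s + 1) j := fun j => by
    refine le_trans ?_ (inv_card_sub_le_exp4q hξ0 hg hθ.1 s j)
    have hF' : 1 / (F : ℝ) ≤ 1 / Fintype.card E :=
      one_div_le_one_div_of_le (Nat.cast_pos.2 Fintype.card_pos) (Nat.cast_le.2 hF)
    have hθR : s * (θ / √n) ≤ R / √n * s := by
      rw [mul_comm]
      gcongr
      exact hθ.2
    linarith
  calc ε = ε / ρ * ρ := (div_mul_cancel₀ _ hρ.ne').symm
    _ ≤ ε / ρ * ∑ j, ξ j (s + 1) a := by gcongr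
    _ ≤ exp4Pi n K ξ g A θ (s + 1) a := by
        rw [mul_sum]
        exact sum_le_sum fun j _ => mul_le_mul_of_nonneg_right (hq j) (hξ0 _ _ _)

lemma exp4Pi_succ_le_exp_mul (hξ0 : ∀ j t a, 0 ≤ ξ j t a) (θ δ : ℝ) (s : ℕ) (a : Fin K) :
    exp4Pi n K ξ g A θ (s + 1) a ≤
      exp (2 * ‖exp4Score n K ξ g A θ s - exp4Score n K ξ g A δ s‖) *
        exp4Pi n K ξ g A δ (s + 1) a := by
  have hq : ∀ j, exp4q n K ξ g A θ (s + 1) j ≤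
      exp (2 * ‖exp4Score n K ξ g A θ s - exp4Score n K ξ g A δ s‖) *
        exp4q n K ξ g A δ (s + 1) j := fun j => by
    rw [exp4q_succ_eq_softmax_neg_exp4Score, exp4q_succ_eq_softmax_neg_exp4Score, ← norm_neg,
      neg_sub, ← neg_sub_neg]
    exact softmax_le_exp_mul_softmax _ _ j
  unfold exp4Pi
  rw [mul_sum]
  refine sum_le_sum fun j _ => ?_
  rw [← mul_assoc]
  exact mul_le_mul_of_nonneg_right (hq j) (hξ0 _ _ _)

lemma abs_log_exp4Pi_div_le (hξ0 : ∀ j t a, 0 ≤ ξ j t a) {a : Fin K}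
    (hθ : 0 < exp4Pi n K ξ g A θ (s + 1) a) (hδ : 0 < exp4Pi n K ξ g A δ (s + 1) a) :
    |log (exp4Pi n K ξ g A θ (s + 1) a / exp4Pi n K ξ g A δ (s + 1) a)| ≤
      2 * ‖exp4Score n K ξ g A θ s - exp4Score n K ξ g A δ s‖ :=
  abs_log_div_le_of_le_exp_mul hθ hδ (exp4Pi_succ_le_exp_mul hξ0 θ δ s a)
    (norm_sub_rev (exp4Score n K ξ g A θ s) _ ▸ exp4Pi_succ_le_exp_mul hξ0 δ θ s a)

lemma norm_exp4Score_succ_sub_le {ε R : ℝ} (hξ0 : ∀ j t a, 0 ≤ ξ j t a)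
    (hξ1 : ∀ j t, ∑ a, ξ j t a = 1) (hg : ∀ a t, g a t ∈ Set.Icc (0 : ℝ) 1)
    (hδ : δ ∈ Set.Icc 0 R) (hε : 0 < ε)
    (hπθ : ε ≤ exp4Pi n K ξ g A θ (s + 1) (A (s + 1)))
    (hπδ : ε ≤ exp4Pi n K ξ g A δ (s + 1) (A (s + 1))) :
    ‖exp4Score n K ξ g A θ (s + 1) - exp4Score n K ξ g A δ (s + 1)‖ ≤
      (1 + 2 * (R / √n) / ε) * ‖exp4Score n K ξ g A θ s - exp4Score n K ξ g A δ s‖ +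
        |θ - δ| / √n / ε := by
  have hβ : 0 ≤ R / √n := div_nonneg (hδ.1.trans hδ.2) (sqrt_nonneg _)
  refine (pi_norm_le_iff_of_nonneg (by positivity)).2 fun j => ?_
  rw [Real.norm_eq_abs, Pi.sub_apply, exp4Score_succ, exp4Score_succ]
  set u := ‖exp4Score n K ξ g A θ s - exp4Score n K ξ g A δ s‖
  set p := exp4Pi n K ξ g A θ (s + 1) (A (s + 1))
  set p' := exp4Pi n K ξ g A δ (s + 1) (A (s + 1))
  set c := ξ j (s + 1) (A (s + 1)) * g (A (s + 1)) (s + 1)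
  have hp : 0 < p := hε.trans_le hπθ
  have hinv : |p⁻¹ - p'⁻¹| ≤ 2 * u / ε :=
    (abs_inv_sub_inv_le_abs_log_div hε hπθ hπδ).trans
      (div_le_div_of_nonneg_right (abs_log_exp4Pi_div_le hξ0 hp (hε.trans_le hπδ)) hε.le)
  have hrate : |θ / √n / p - δ / √n / p'| ≤ |θ - δ| / √n / ε + R / √n * (2 * u / ε) := by
    rw [show θ / √n / p - δ / √n / p' = (θ - δ) / √n * p⁻¹ + δ / √n * (p⁻¹ - p'⁻¹) by ring]
    refine (abs_add_le _ _).trans (add_le_add ?_ ?_)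
    · rw [abs_mul, abs_div, abs_of_nonneg (sqrt_nonneg _), abs_of_pos (inv_pos.2 hp),
        ← div_eq_mul_inv]
      gcongr
    · rw [abs_mul, abs_of_nonneg (div_nonneg hδ.1 (sqrt_nonneg _))]
      exact mul_le_mul (div_le_div_of_nonneg_right hδ.2 (sqrt_nonneg _)) hinv (abs_nonneg _) hβ
  have hc0 : 0 ≤ c := mul_nonneg (hξ0 _ _ _) (hg _ _).1
  have hc1 : c ≤ 1 := mul_le_one₀
    ((single_le_sum (fun b _ => hξ0 j (s + 1) b) (mem_univ _)).trans (hξ1 j (s + 1)).le)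
    (hg _ _).1 (hg _ _).2
  have hj : |exp4Score n K ξ g A θ s j - exp4Score n K ξ g A δ s j| ≤ u := by
    simpa using norm_le_pi_norm (exp4Score n K ξ g A θ s - exp4Score n K ξ g A δ s) j
  calc _ = |(exp4Score n K ξ g A θ s j - exp4Score n K ξ g A δ s j) +
        c * (θ / √n / p - δ / √n / p')| := by ring_nf
    _ ≤ u + 1 * (|θ - δ| / √n / ε + R / √n * (2 * u / ε)) := by
        refine (abs_add_le _ _).trans (add_le_add hj ?_)
        rw [abs_mul, abs_of_nonneg hc0]
        exact mul_le_mul hc1 hrate (abs_nonneg _) zero_le_one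
    _ = _ := by ring

lemma norm_exp4Score_sub_le {ε R : ℝ} (hξ0 : ∀ j t a, 0 ≤ ξ j t a)
    (hξ1 : ∀ j t, ∑ a, ξ j t a = 1) (hg : ∀ a t, g a t ∈ Set.Icc (0 : ℝ) 1)
    (hδ : δ ∈ Set.Icc 0 R) (hε : 0 < ε) (hR : 0 < R) (N : ℕ)
    (hπ : ∀ s < N, ε ≤ exp4Pi n K ξ g A θ (s + 1) (A (s + 1)) ∧
      ε ≤ exp4Pi n K ξ g A δ (s + 1) (A (s + 1))) :
    ‖exp4Score n K ξ g A θ N - exp4Score n K ξ g A δ N‖ ≤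
      |θ - δ| / √n / ε * N * exp (2 * (R / √n) / ε * N) :=
  discrete_gronwall_of_forall_lt
    (u := fun s => ‖exp4Score n K ξ g A θ s - exp4Score n K ξ g A δ s‖) (by positivity)
    (by positivity) (by simp [exp4Score, exp4Y_zero])
    (fun s hs => norm_exp4Score_succ_sub_le hξ0 hξ1 hg hδ hε (hπ s hs).1 (hπ s hs).2) N le_rfl

end Exp4

theorem exp4_lipschitz_general (n K : ℕ)
    {E : Type*} [Fintype E]
    (ξ : E → ℕ → Fin K → ℝ)
    (hξ0 : ∀ j t a, 0 ≤ ξ j t a) (hξ1 : ∀ j t, ∑ a, ξ j t a = 1)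
    (g : Fin K → ℕ → ℝ) (hg : ∀ a t, g a t ∈ Set.Icc (0 : ℝ) 1)
    (A : ℕ → Fin K)
    (ρ : ℝ) (hρ : 0 < ρ) (hρξ : ∀ t, 1 ≤ t → ∀ i : Fin K, ρ ≤ ∑ j, ξ j t i)
    (F : ℕ) (hF : Fintype.card E ≤ F)
    (ε R : ℝ) (hε : 0 < ε) (hεF : ε < ρ / F) (hR : 0 < R)
    (Tε : ℕ) (hTε : Tε = min ⌊(1 / F - ε / ρ) * Real.sqrt n / R⌋₊ n)
    (Lε : ℝ) (hLε : Lε = 1 / (R * ε ^ 2) * Real.exp (1 / ε ^ 2)) :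
    ∀ θ δ : ℝ, θ ∈ Set.Icc 0 R → δ ∈ Set.Icc 0 R →
      ∀ t, 1 ≤ t → t ≤ Tε → ∀ k,
        |Real.log (exp4Pi n K ξ g A θ t k / exp4Pi n K ξ g A δ t k)| ≤
          Lε * |θ - δ| := by
  intro θ δ hθ hδ t ht htT k
  obtain ⟨s, rfl⟩ : ∃ s, t = s + 1 := ⟨t - 1, by omega⟩
  have hF1 : (1 : ℝ) ≤ F :=
    Nat.one_le_cast.2 (Nat.pos_of_ne_zero (by rintro rfl; simp at hεF; linarith))
  have hF0 : (0 : ℝ) < F := one_pos.trans_le hF1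
  have hρF : ρ ≤ F := calc
    ρ ≤ ∑ j, ξ j 1 k := hρξ 1 le_rfl k
    _ ≤ ∑ _j : E, (1 : ℝ) := sum_le_sum fun j _ =>
        (single_le_sum (fun b _ => hξ0 j 1 b) (mem_univ k)).trans (hξ1 j 1).le
    _ = Fintype.card E := by simp
    _ ≤ F := Nat.cast_le.2 hF
  have hgap : ε / ρ < 1 / F := by rwa [div_lt_div_iff₀ hρ hF0, one_mul, ← lt_div_iff₀ hF0]
  have hs : R / √n * s ≤ 1 / F - ε / ρ :=
    mul_le_of_le_floor (by linarith) hR (sqrt_nonneg _) (by rw [hTε] at htT; omega)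
  have hπ : ∀ θ' ∈ Set.Icc 0 R, ∀ s' ≤ s, ∀ a, ε ≤ exp4Pi n K ξ g A θ' (s' + 1) a :=
    fun θ' hθ' s' hs' a => eps_le_exp4Pi_succ hξ0 hg hε hρ (hρξ _ (by omega) a) hF hθ'
      ((mul_le_mul_of_nonneg_left (Nat.cast_le.2 hs') (div_nonneg hR.le (sqrt_nonneg _))).trans hs)
  have hz : 2 * ε * (R / √n * s) ≤ 1 :=
    (mul_le_mul_of_nonneg_left hs (by positivity)).trans (two_mul_mul_sub_div_le_one hε hρ hρF hF1)
  calc |log (exp4Pi n K ξ g A θ (s + 1) k / exp4Pi n K ξ g A δ (s + 1) k)|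
      ≤ 2 * ‖exp4Score n K ξ g A θ s - exp4Score n K ξ g A δ s‖ :=
        abs_log_exp4Pi_div_le hξ0 (hε.trans_le (hπ θ hθ s le_rfl k))
          (hε.trans_le (hπ δ hδ s le_rfl k))
    _ ≤ 2 * (|θ - δ| / √n / ε * s * exp (2 * (R / √n) / ε * s)) := by
        gcongr
        exact norm_exp4Score_sub_le hξ0 hξ1 hg hδ hε hR s fun s' hs' =>
          ⟨hπ θ hθ s' hs'.le _, hπ δ hδ s' hs'.le _⟩
    _ ≤ Lε * |θ - δ| := hLε ▸ two_mul_gronwall_bound_le (abs_nonneg _) hR hε hz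

/-- Lipschitz parameterization of `Exp4`. If `Σ_j ξ_{j,t}(i) ≥ ρ`
for all `t ≥ 1` and `i`, `F ≥ |E|`, `ε ∈ (0, ρ/F)`,
`T_ε = min(⌊(1/F − ε/ρ)√n/R⌋, n)` and `L_ε = (1/(Rε²)) e^{1/ε²}`, then for all
parameters `θ, δ ∈ [r, R] ⊆ [0, R]` and all `1 ≤ t ≤ T_ε`,
`sup_k |log(π_t^θ(k)/π_t^δ(k))| ≤ L_ε |θ − δ|`. -/
theorem exp4_lipschitz (n K : ℕ) (hn : 1 ≤ n) (hK : 2 ≤ K)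
    {E : Type*} [Fintype E] [Nonempty E]
    (ξ : E → ℕ → Fin K → ℝ)
    (hξ0 : ∀ j t a, 0 ≤ ξ j t a) (hξ1 : ∀ j t, ∑ a, ξ j t a = 1)
    (g : Fin K → ℕ → ℝ) (hg : ∀ a t, g a t ∈ Set.Icc (0 : ℝ) 1)
    (A : ℕ → Fin K)
    (ρ : ℝ) (hρ : 0 < ρ) (hρξ : ∀ t, 1 ≤ t → ∀ i : Fin K, ρ ≤ ∑ j, ξ j t i)
    (F : ℕ) (hF : Fintype.card E ≤ F)
    (ε R : ℝ) (hε : 0 < ε) (hεF : ε < ρ / F) (hR : 0 < R)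
    (Tε : ℕ) (hTε : Tε = min ⌊(1 / F - ε / ρ) * Real.sqrt n / R⌋₊ n)
    (Lε : ℝ) (hLε : Lε = 1 / (R * ε ^ 2) * Real.exp (1 / ε ^ 2)) :
    ∀ θ δ : ℝ, θ ∈ Set.Icc 0 R → δ ∈ Set.Icc 0 R →
      ∀ t, 1 ≤ t → t ≤ Tε → ∀ k,
        |Real.log (exp4Pi n K ξ g A θ t k / exp4Pi n K ξ g A δ t k)| ≤
          Lε * |θ - δ| :=
  exp4_lipschitz_general n K ξ hξ0 hξ1 g hg A ρ hρ hρξ F hF ε R hε hεF hR Tε hTε Lε hLε
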